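/- Suppose a ≥ b ≥ c ≥ d > 0 and ad > bc. Then H(a,b)/H(c,d) < G(a,b)/G(c,d) < L(a,b)/L(c,d) < I(a,b)/I(c,d) < A(a,b)/A(c,d), where H, G, L, I, A are the harmonic, geometric, logarithmic, identric, and arithmetic means. If ad < bc, all inequalities reverse; if ad = bc, all become equalities. -/

import Mathlib

noncomputable def arithMean (x y : ℝ) : ℝ := (x + y) / 2

noncomputable def geomMean (x y : ℝ) : ℝ := Real.sqrt (x * y)

noncomputable def harmMean (x y : ℝ) : ℝ := 2 * x * y / (x + y)

noncomputable def logMean (x y : ℝ) : ℝ :=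
  if x = y then x else (x - y) / (Real.log x - Real.log y)

noncomputable def identricMean (x y : ℝ) : ℝ :=
  if x = y then x else (1 / Real.exp 1) * (x ^ x / y ^ y) ^ (1 / (x - y))

/-!
All five means are positively homogeneous, so with `p = √(xy)` and `u = (log x - log y) / 2`
we get `M x y = p * m u`, where the profile `m u = M (exp u) (exp (-u))` is `1 / cosh u`, `1`,
`sinh u / u`, `exp (u coth u - 1)` and `cosh u` for `H, G, L, I, A`. For consecutive means
`M, N` of this chain the quotient `(N a b / N c d) / (M a b / M c d)` is therefore
`r u / r v` with `r = n / m`, `u = log (a / b) / 2`, `v = log (c / d) / 2`, and `a d ⋚ b c`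
exactly when `u ⋚ v`. Everything reduces to the strict monotonicity of the four profile
ratios `cosh u`, `sinh u / u`, `exp (u coth u - 1 - log (sinh u / u))` and
`exp (log (cosh u) - u coth u + 1)` on `[0, ∞)`, whose derivatives are positive because
`u < sinh u < u cosh u` for `u > 0`.
-/

open Real Set

def PosHomogeneous (M : ℝ → ℝ → ℝ) : Prop :=
  ∀ ⦃t x y : ℝ⦄, 0 < t → 0 < x → 0 < y → M (t * x) (t * y) = t * M x y

lemma identricMean_eq_exp {x y : ℝ} (hx : 0 < x) (hy : 0 < y) (hxy : x ≠ y) :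
    identricMean x y = exp ((x * log x - y * log y) / (x - y) - 1) := by
  rw [identricMean, if_neg hxy, rpow_def_of_pos hx, rpow_def_of_pos hy, ← exp_sub,
    rpow_def_of_pos (exp_pos _), log_exp, one_div, ← exp_neg, ← exp_add]
  congr 1
  ring

lemma arithMean_posHomogeneous : PosHomogeneous arithMean := fun t x y _ _ _ => by
  simp only [arithMean]; ring

lemma geomMean_posHomogeneous : PosHomogeneous geomMean := fun t x y ht _ _ => by
  rw [geomMean, geomMean, show t * x * (t * y) = t * t * (x * y) by ring,
    sqrt_mul (mul_self_nonneg t), sqrt_mul_self ht.le]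

lemma harmMean_posHomogeneous : PosHomogeneous harmMean := fun t x y ht hx hy => by
  simp only [harmMean]
  field_simp

lemma logMean_posHomogeneous : PosHomogeneous logMean := fun t x y ht hx hy => by
  by_cases hxy : x = y
  · simp [logMean, hxy]
  rw [logMean, logMean, if_neg hxy, if_neg (by simpa [ht.ne'] using hxy),
    log_mul ht.ne' hx.ne', log_mul ht.ne' hy.ne', ← mul_sub, mul_div_assoc]
  congr 1
  ring

lemma identricMean_posHomogeneous : PosHomogeneous identricMean := fun t x y ht hx hy => by
  by_cases hxy : x = y
  · simp [identricMean, hxy]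
  have htxy : t * x ≠ t * y := by simpa [ht.ne'] using hxy
  have hsub : x - y ≠ 0 := sub_ne_zero.mpr hxy
  rw [identricMean_eq_exp (by positivity) (by positivity) htxy, identricMean_eq_exp hx hy hxy,
    log_mul ht.ne' hx.ne', log_mul ht.ne' hy.ne']
  rw [show (t * x * (log t + log x) - t * y * (log t + log y)) / (t * x - t * y) - 1
      = log t + ((x * log x - y * log y) / (x - y) - 1) by field_simp; ring,
    exp_add, exp_log ht]

lemma harmMean_pos {x y : ℝ} (hx : 0 < x) (hy : 0 < y) : 0 < harmMean x y := by
  unfold harmMean; positivity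

lemma geomMean_pos {x y : ℝ} (hx : 0 < x) (hy : 0 < y) : 0 < geomMean x y := by
  unfold geomMean; positivity

lemma arithMean_pos {x y : ℝ} (hx : 0 < x) (hy : 0 < y) : 0 < arithMean x y := by
  unfold arithMean; positivity

lemma logMean_pos {x y : ℝ} (hx : 0 < x) (hy : 0 < y) : 0 < logMean x y := by
  unfold logMean
  split_ifs with hxy
  · exact hx
  rcases lt_or_gt_of_ne hxy with h | h
  · exact div_pos_of_neg_of_neg (by linarith) (by linarith [log_lt_log hx h])
  · exact div_pos (by linarith) (by linarith [log_lt_log hy h])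

lemma identricMean_pos {x y : ℝ} (hx : 0 < x) (hy : 0 < y) : 0 < identricMean x y := by
  unfold identricMean
  split_ifs
  · exact hx
  · positivity

noncomputable def profile (M : ℝ → ℝ → ℝ) (u : ℝ) : ℝ := M (exp u) (exp (-u))

lemma PosHomogeneous.eq_sqrt_mul_profile {M : ℝ → ℝ → ℝ} (hM : PosHomogeneous M) {x y : ℝ}
    (hx : 0 < x) (hy : 0 < y) : M x y = √(x * y) * profile M ((log x - log y) / 2) := by
  have hsqrt : √(x * y) = exp ((log x + log y) / 2) := by
    rw [exp_half, exp_add, exp_log hx, exp_log hy]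
  have hx' : x = √(x * y) * exp ((log x - log y) / 2) := by
    rw [hsqrt, ← exp_add, ← exp_log hx]; congr 1; simp only [log_exp]; ring
  have hy' : y = √(x * y) * exp (-((log x - log y) / 2)) := by
    rw [hsqrt, ← exp_add, ← exp_log hy]; congr 1; simp only [log_exp]; ring
  have h := hM (sqrt_pos.mpr (mul_pos hx hy)) (exp_pos ((log x - log y) / 2))
    (exp_pos (-((log x - log y) / 2)))
  rwa [← hx', ← hy'] at h

theorem PosHomogeneous.div_trichotomy {M N : ℝ → ℝ → ℝ} (hM : PosHomogeneous M)
    (hN : PosHomogeneous N) (hM₀ : ∀ {x y : ℝ}, 0 < x → 0 < y → 0 < M x y)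
    (hN₀ : ∀ {x y : ℝ}, 0 < x → 0 < y → 0 < N x y)
    (hmono : StrictMonoOn (fun u => profile N u / profile M u) (Ici 0))
    {a b c d : ℝ} (hab : b ≤ a) (hb : 0 < b) (hcd : d ≤ c) (hd : 0 < d) :
    (b * c < a * d → M a b / M c d < N a b / N c d) ∧
    (a * d < b * c → N a b / N c d < M a b / M c d) ∧
    (a * d = b * c → M a b / M c d = N a b / N c d) := by
  have ha := hb.trans_le hab
  have hc := hd.trans_le hcd
  set u := (log a - log b) / 2 with hu_def
  set v := (log c - log d) / 2 with hv_def
  have hu : u ∈ Ici 0 := by have := log_le_log hb hab; simp only [mem_Ici]; linarith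
  have hv : v ∈ Ici 0 := by have := log_le_log hd hcd; simp only [mem_Ici]; linarith
  have hprof (L : ℝ → ℝ → ℝ) (hL₀ : ∀ {x y : ℝ}, 0 < x → 0 < y → 0 < L x y) (w : ℝ) :
      0 < profile L w := hL₀ (exp_pos w) (exp_pos (-w))
  have hlog : log (a * d) - log (b * c) = 2 * (u - v) := by
    rw [log_mul ha.ne' hd.ne', log_mul hb.ne' hc.ne']; ring
  have hX : 0 < M a b / M c d := div_pos (hM₀ ha hb) (hM₀ hc hd)
  have hrv : 0 < profile N v / profile M v := div_pos (hprof N hN₀ v) (hprof M hM₀ v)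
  have key : (N a b / N c d) / (M a b / M c d) =
      (profile N u / profile M u) / (profile N v / profile M v) := by
    rw [hM.eq_sqrt_mul_profile ha hb, hM.eq_sqrt_mul_profile hc hd,
      hN.eq_sqrt_mul_profile ha hb, hN.eq_sqrt_mul_profile hc hd, ← hu_def, ← hv_def]
    have := hprof M hM₀ u; have := hprof M hM₀ v; have := hprof N hN₀ u; have := hprof N hN₀ v
    have : 0 < √(a * b) := by positivity
    have : 0 < √(c * d) := by positivity
    field_simp
  refine ⟨fun h => ?_, fun h => ?_, fun h => ?_⟩
  · rw [← one_lt_div hX, key, one_lt_div hrv]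
    exact hmono hv hu (by linarith [log_lt_log (by positivity) h])
  · rw [← div_lt_one hX, key, div_lt_one hrv]
    exact hmono hu hv (by linarith [log_lt_log (by positivity) h])
  · rw [eq_comm, ← div_eq_one_iff_eq hX.ne', key, show u = v by linarith [congrArg log h],
      div_self hrv.ne']

lemma dslope_sinh_of_ne {u : ℝ} (hu : u ≠ 0) : dslope sinh 0 u = sinh u / u := by
  rw [dslope_of_ne _ hu, slope_def_field, sinh_zero, sub_zero, sub_zero]

lemma dslope_sinh_zero : dslope sinh 0 0 = 1 := by
  rw [dslope_same, Real.deriv_sinh, cosh_zero]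

lemma dslope_sinh_pos (u : ℝ) : 0 < dslope sinh 0 u := by
  rcases lt_trichotomy u 0 with hu | rfl | hu
  · rw [dslope_sinh_of_ne hu.ne]; exact div_pos_of_neg_of_neg (sinh_neg_iff.mpr hu) hu
  · rw [dslope_sinh_zero]; exact one_pos
  · rw [dslope_sinh_of_ne hu.ne']; exact div_pos (sinh_pos_iff.mpr hu) hu

lemma continuous_dslope_sinh : Continuous (dslope sinh 0) := by
  refine continuous_iff_continuousAt.mpr fun u => ?_
  rcases eq_or_ne u 0 with rfl | hu
  · exact continuousAt_dslope_same.mpr differentiableAt_sinh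
  · exact (continuousAt_dslope_of_ne hu).mpr continuous_sinh.continuousAt

lemma hasDerivAt_dslope_sinh {u : ℝ} (hu : u ≠ 0) :
    HasDerivAt (dslope sinh 0) ((u * cosh u - sinh u) / u ^ 2) u := by
  have h := (hasDerivAt_sinh u).div (hasDerivAt_id u) hu
  refine (h.congr_of_eventuallyEq ?_).congr_deriv (by simp only [id]; ring)
  filter_upwards [isOpen_ne.mem_nhds hu] with t ht using dslope_sinh_of_ne ht

lemma harmMean_profile (u : ℝ) : profile harmMean u = (cosh u)⁻¹ := by
  rw [profile, harmMean, cosh_eq, mul_assoc, ← exp_add, add_neg_cancel, exp_zero]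
  field_simp

lemma geomMean_profile (u : ℝ) : profile geomMean u = 1 := by
  rw [profile, geomMean, ← exp_add, add_neg_cancel, exp_zero, sqrt_one]

lemma arithMean_profile (u : ℝ) : profile arithMean u = cosh u := by
  rw [profile, arithMean, cosh_eq]

lemma logMean_profile (u : ℝ) : profile logMean u = dslope sinh 0 u := by
  rcases eq_or_ne u 0 with rfl | hu
  · simp [profile, logMean]
  rw [profile, logMean, if_neg (by simpa [eq_neg_iff_add_eq_zero, ← two_mul] using hu),
    log_exp, log_exp, dslope_sinh_of_ne hu, sinh_eq]
  ring

-- Writing `u coth u` as `cosh u / dslope sinh 0 u` keeps it continuous at `u = 0`.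
lemma identricMean_profile (u : ℝ) :
    profile identricMean u = exp (cosh u / dslope sinh 0 u - 1) := by
  rcases eq_or_ne u 0 with rfl | hu
  · simp [profile, identricMean]
  have hne : exp u ≠ exp (-u) := by simpa [eq_neg_iff_add_eq_zero, ← two_mul] using hu
  rw [profile, identricMean_eq_exp (exp_pos _) (exp_pos _) hne, log_exp, log_exp,
    dslope_sinh_of_ne hu, cosh_eq, sinh_eq]
  have : exp u - exp (-u) ≠ 0 := sub_ne_zero.mpr hne
  congr 1
  field_simp
  ring

lemma strictMonoOn_Ici_zero_of_hasDerivAt_pos {f f' : ℝ → ℝ} (hf : Continuous f)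
    (hf' : ∀ u, 0 < u → HasDerivAt f (f' u) u) (hpos : ∀ u, 0 < u → 0 < f' u) :
    StrictMonoOn f (Ici 0) :=
  strictMonoOn_of_deriv_pos (convex_Ici 0) hf.continuousOn fun u hu => by
    rw [interior_Ici] at hu
    rw [(hf' u hu).deriv]
    exact hpos u hu

lemma sinh_lt_mul_cosh {u : ℝ} (hu : 0 < u) : sinh u < u * cosh u := by
  have hmono : StrictMonoOn (fun t => t * cosh t - sinh t) (Ici 0) :=
    strictMonoOn_Ici_zero_of_hasDerivAt_pos (by fun_prop)
      (fun t _ => ((hasDerivAt_id t).mul (hasDerivAt_cosh t)).sub (hasDerivAt_sinh t))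
      (fun t _ => by simp only [id, one_mul, add_sub_cancel_left]; positivity)
  have h := hmono self_mem_Ici hu.le hu
  simp only [zero_mul, sinh_zero, sub_zero] at h
  linarith

lemma strictMonoOn_dslope_sinh : StrictMonoOn (dslope sinh 0) (Ici 0) :=
  strictMonoOn_Ici_zero_of_hasDerivAt_pos continuous_dslope_sinh
    (fun _ hu => hasDerivAt_dslope_sinh hu.ne')
    (fun _ hu => div_pos (sub_pos.mpr (sinh_lt_mul_cosh hu)) (by positivity))

lemma strictMonoOn_cosh_div_dslope_sinh_sub_log :
    StrictMonoOn (fun u => cosh u / dslope sinh 0 u - 1 - log (dslope sinh 0 u)) (Ici 0) := by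
  refine strictMonoOn_Ici_zero_of_hasDerivAt_pos
    (f' := fun u => (sinh u ^ 2 - u ^ 2) / (u * sinh u ^ 2)) ?_ (fun u hu => ?_) (fun u hu => ?_)
  · have := continuous_dslope_sinh
    exact ((continuous_cosh.div this fun u => (dslope_sinh_pos u).ne').sub continuous_const).sub
      (this.log fun u => (dslope_sinh_pos u).ne')
  · have hS := hasDerivAt_dslope_sinh hu.ne'
    refine ((((hasDerivAt_cosh u).div hS (dslope_sinh_pos u).ne').sub_const 1).sub
      (hS.log (dslope_sinh_pos u).ne')).congr_deriv ?_
    have hsinh : sinh u ≠ 0 := (sinh_pos_iff.mpr hu).ne'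
    rw [dslope_sinh_of_ne hu.ne']
    field_simp
    linear_combination (-(u ^ 2)) * cosh_sq_sub_sinh_sq u
  · have hsinh : u < sinh u := self_lt_sinh_iff.mpr hu
    exact div_pos (by nlinarith) (by positivity)

lemma strictMonoOn_log_cosh_sub_cosh_div_dslope_sinh :
    StrictMonoOn (fun u => log (cosh u) - (cosh u / dslope sinh 0 u - 1)) (Ici 0) := by
  refine strictMonoOn_Ici_zero_of_hasDerivAt_pos
    (f' := fun u => (u * cosh u - sinh u) / (cosh u * sinh u ^ 2)) ?_ (fun u hu => ?_)
    (fun u hu => ?_)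
  · have := continuous_dslope_sinh
    exact (continuous_cosh.log fun u => (cosh_pos u).ne').sub
      ((continuous_cosh.div this fun u => (dslope_sinh_pos u).ne').sub continuous_const)
  · have hS := hasDerivAt_dslope_sinh hu.ne'
    refine (((hasDerivAt_cosh u).log (cosh_pos u).ne').sub
      (((hasDerivAt_cosh u).div hS (dslope_sinh_pos u).ne').sub_const 1)).congr_deriv ?_
    have hsinh : sinh u ≠ 0 := (sinh_pos_iff.mpr hu).ne'
    have hcosh : cosh u ≠ 0 := (cosh_pos u).ne'
    rw [dslope_sinh_of_ne hu.ne']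
    field_simp
    linear_combination (u * cosh u - sinh u) * cosh_sq_sub_sinh_sq u
  · exact div_pos (sub_pos.mpr (sinh_lt_mul_cosh hu)) (by positivity)

lemma strictMonoOn_geomMean_div_harmMean :
    StrictMonoOn (fun u => profile geomMean u / profile harmMean u) (Ici 0) := by
  simpa only [geomMean_profile, harmMean_profile, one_div, inv_inv] using cosh_strictMonoOn

lemma strictMonoOn_logMean_div_geomMean :
    StrictMonoOn (fun u => profile logMean u / profile geomMean u) (Ici 0) := by
  simpa only [logMean_profile, geomMean_profile, div_one] using strictMonoOn_dslope_sinh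

lemma strictMonoOn_identricMean_div_logMean :
    StrictMonoOn (fun u => profile identricMean u / profile logMean u) (Ici 0) := by
  have h : (fun u => profile identricMean u / profile logMean u) =
      exp ∘ fun u => cosh u / dslope sinh 0 u - 1 - log (dslope sinh 0 u) := funext fun u => by
    rw [identricMean_profile, logMean_profile, Function.comp_apply, exp_sub _ (log _),
      exp_log (dslope_sinh_pos u)]
  rw [h]
  exact exp_strictMono.comp_strictMonoOn strictMonoOn_cosh_div_dslope_sinh_sub_log

lemma strictMonoOn_arithMean_div_identricMean :
    StrictMonoOn (fun u => profile arithMean u / profile identricMean u) (Ici 0) := by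
  have h : (fun u => profile arithMean u / profile identricMean u) =
      exp ∘ fun u => log (cosh u) - (cosh u / dslope sinh 0 u - 1) := funext fun u => by
    rw [arithMean_profile, identricMean_profile, Function.comp_apply, exp_sub (log _),
      exp_log (cosh_pos u)]
  rw [h]
  exact exp_strictMono.comp_strictMonoOn strictMonoOn_log_cosh_sub_cosh_div_dslope_sinh

theorem stmt17 (a b c d : ℝ) (hab : a ≥ b) (hbc : b ≥ c) (hcd : c ≥ d) (hd : d > 0) :
    (a * d > b * c →
      harmMean a b / harmMean c d < geomMean a b / geomMean c d ∧
      geomMean a b / geomMean c d < logMean a b / logMean c d ∧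
      logMean a b / logMean c d < identricMean a b / identricMean c d ∧
      identricMean a b / identricMean c d < arithMean a b / arithMean c d) ∧
    (a * d < b * c →
      harmMean a b / harmMean c d > geomMean a b / geomMean c d ∧
      geomMean a b / geomMean c d > logMean a b / logMean c d ∧
      logMean a b / logMean c d > identricMean a b / identricMean c d ∧
      identricMean a b / identricMean c d > arithMean a b / arithMean c d) ∧
    (a * d = b * c →
      harmMean a b / harmMean c d = geomMean a b / geomMean c d ∧
      geomMean a b / geomMean c d = logMean a b / logMean c d ∧
      logMean a b / logMean c d = identricMean a b / identricMean c d ∧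
      identricMean a b / identricMean c d = arithMean a b / arithMean c d) := by
  have hb : 0 < b := hd.trans_le (hcd.trans hbc)
  obtain ⟨HG₁, HG₂, HG₃⟩ := harmMean_posHomogeneous.div_trichotomy geomMean_posHomogeneous
    harmMean_pos geomMean_pos strictMonoOn_geomMean_div_harmMean hab hb hcd hd
  obtain ⟨GL₁, GL₂, GL₃⟩ := geomMean_posHomogeneous.div_trichotomy logMean_posHomogeneous
    geomMean_pos logMean_pos strictMonoOn_logMean_div_geomMean hab hb hcd hd
  obtain ⟨LI₁, LI₂, LI₃⟩ := logMean_posHomogeneous.div_trichotomy identricMean_posHomogeneous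
    logMean_pos identricMean_pos strictMonoOn_identricMean_div_logMean hab hb hcd hd
  obtain ⟨IA₁, IA₂, IA₃⟩ := identricMean_posHomogeneous.div_trichotomy arithMean_posHomogeneous
    identricMean_pos arithMean_pos strictMonoOn_arithMean_div_identricMean hab hb hcd hd
  exact ⟨fun h => ⟨HG₁ h, GL₁ h, LI₁ h, IA₁ h⟩, fun h => ⟨HG₂ h, GL₂ h, LI₂ h, IA₂ h⟩,
    fun h => ⟨HG₃ h, GL₃ h, LI₃ h, IA₃ h⟩⟩
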